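/- arXiv:1110.6591 — 4 statements merged into one kernel-verified Lean document; each statement's English description precedes it below -/
import Mathlib

section
/- Let (Q, ·) be a finite quasigroup with parastrophe operations \ (left division) and / (right division). Then (Q,·) is orthogonal to its (12)-parastrophe x*y = y·x if and only if for all x, y, z ∈ Q: (x\z)·x = (y\z)·y implies x = y. -/
/-! The solutions of `x·y = a` are exactly the pairs `(x, x\a)`, so the system `x·y = a, y·x = b`
has a unique solution for every `b` iff `x ↦ (x\a)·x` is a bijection of `Q`. For finite `Q` this
is the same as injectivity, which is the stated implication. -/

theorem existsUnique_prod_graph_iff {α β : Type*} (g : α → β) (P : α → Prop) :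
    (∃! p : α × β, p.2 = g p.1 ∧ P p.1) ↔ ∃! x, P x := by
  constructor
  · rintro ⟨⟨x, y⟩, ⟨-, hx⟩, hu⟩
    exact ⟨x, hx, fun x' hx' => congrArg Prod.fst (hu (x', g x') ⟨rfl, hx'⟩)⟩
  · rintro ⟨x, hx, hu⟩
    refine ⟨(x, g x), ⟨rfl, hx⟩, ?_⟩
    rintro ⟨x', y'⟩ ⟨hy' : y' = g x', hx' : P x'⟩
    rw [hy', hu x' hx']

section LeftDivision

variable {Q : Type*} {mul ldiv : Q → Q → Q}

theorem mul_eq_iff_eq_ldiv (h1 : ∀ x y, mul x (ldiv x y) = y) (h2 : ∀ x y, ldiv x (mul x y) = y)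
    {x y a : Q} : mul x y = a ↔ y = ldiv x a :=
  ⟨fun h => h ▸ (h2 x y).symm, fun h => h ▸ h1 x a⟩

theorem existsUnique_mul_and_mul_swap_iff (h1 : ∀ x y, mul x (ldiv x y) = y)
    (h2 : ∀ x y, ldiv x (mul x y) = y) (a b : Q) :
    (∃! p : Q × Q, mul p.1 p.2 = a ∧ mul p.2 p.1 = b) ↔ ∃! x, mul (ldiv x a) x = b := by
  have hsol : ∀ p : Q × Q, (mul p.1 p.2 = a ∧ mul p.2 p.1 = b) ↔
      (p.2 = ldiv p.1 a ∧ mul (ldiv p.1 a) p.1 = b) := by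
    rintro ⟨x, y⟩
    dsimp only
    rw [mul_eq_iff_eq_ldiv h1 h2]
    constructor <;> rintro ⟨rfl, h⟩ <;> exact ⟨rfl, h⟩
  simp only [hsol]
  exact existsUnique_prod_graph_iff (fun x => ldiv x a) (fun x => mul (ldiv x a) x = b)

end LeftDivision

theorem orth_12_parastrophe_general {Q : Type*} [Fintype Q] (mul ldiv : Q → Q → Q)
    (h1 : ∀ x y, mul x (ldiv x y) = y) (h2 : ∀ x y, ldiv x (mul x y) = y) :
    (∀ a b : Q, ∃! p : Q × Q, mul p.1 p.2 = a ∧ mul p.2 p.1 = b) ↔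
      ∀ x y z : Q, mul (ldiv x z) x = mul (ldiv y z) y → x = y := by
  calc (∀ a b : Q, ∃! p : Q × Q, mul p.1 p.2 = a ∧ mul p.2 p.1 = b)
      ↔ ∀ a, Function.Bijective fun x => mul (ldiv x a) x := by
        simp only [existsUnique_mul_and_mul_swap_iff h1 h2, Function.bijective_iff_existsUnique]
    _ ↔ ∀ a, Function.Injective fun x => mul (ldiv x a) x := by
        simp only [Finite.injective_iff_bijective]
    _ ↔ ∀ x y z : Q, mul (ldiv x z) x = mul (ldiv y z) y → x = y :=
        ⟨fun h x y z => @h z x y, fun h z x y => h x y z⟩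

/-- a finite quasigroup is orthogonal to its (12)-parastrophe iff
(x\z)·x = (y\z)·y implies x = y. -/
theorem orth_12_parastrophe {Q : Type*} [Fintype Q] (mul ldiv : Q → Q → Q)
    (h1 : ∀ x y, mul x (ldiv x y) = y) (h2 : ∀ x y, ldiv x (mul x y) = y)
    (hl : ∀ x, Function.Bijective (mul x)) (hr : ∀ y, Function.Bijective (fun x => mul x y)) :
    (∀ a b : Q, ∃! p : Q × Q, mul p.1 p.2 = a ∧ mul p.2 p.1 = b) ↔
      ∀ x y z : Q, mul (ldiv x z) x = mul (ldiv y z) y → x = y :=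
  orth_12_parastrophe_general mul ldiv h1 h2
end

section
/- Let (Q, ·) be a finite quasigroup. Then (Q,·) is orthogonal to its (13)-parastrophe if and only if for all x, y, z ∈ Q: (z·x)·x = (z·y)·y implies x = y. -/
/-!
Since `x / y = b` means `x = b · y`, the pairs `(x, y)` with `x · y = a` and `x / y = b` are exactly
the pairs `(b · y, y)` with `(b · y) · y = a`. So `·` and `/` are orthogonal iff every map
`y ↦ (b · y) · y` is bijective, which on a finite set means injective.
-/

section RightDivision

variable {Q : Type*} {mul rdiv : Q → Q → Q}

theorem rdiv_eq_iff_eq_mul (h1 : ∀ x y, mul (rdiv x y) y = x) (h2 : ∀ x y, rdiv (mul x y) y = x)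
    {x y b : Q} : rdiv x y = b ↔ x = mul b y := by
  constructor
  · rintro rfl
    exact (h1 x y).symm
  · rintro rfl
    exact h2 b y

theorem existsUnique_mul_rdiv_iff (h1 : ∀ x y, mul (rdiv x y) y = x)
    (h2 : ∀ x y, rdiv (mul x y) y = x) (a b : Q) :
    (∃! p : Q × Q, mul p.1 p.2 = a ∧ rdiv p.1 p.2 = b) ↔ ∃! y, mul (mul b y) y = a := by
  have solution_iff : ∀ x y, (mul x y = a ∧ rdiv x y = b) ↔ x = mul b y ∧ mul (mul b y) y = a := by
    intro x y
    rw [rdiv_eq_iff_eq_mul h1 h2]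
    constructor
    · rintro ⟨ha, rfl⟩
      exact ⟨rfl, ha⟩
    · rintro ⟨rfl, ha⟩
      exact ⟨ha, rfl⟩
  constructor
  · rintro ⟨⟨x, y⟩, hp, hunique⟩
    refine ⟨y, ((solution_iff x y).1 hp).2, fun y' hy' => ?_⟩
    exact congrArg Prod.snd (hunique (mul b y', y') ((solution_iff _ _).2 ⟨rfl, hy'⟩))
  · rintro ⟨y, hy, hunique⟩
    refine ⟨(mul b y, y), (solution_iff _ _).2 ⟨rfl, hy⟩, fun ⟨x', y'⟩ hp => ?_⟩
    obtain ⟨rfl, hy'⟩ := (solution_iff x' y').1 hp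
    rw [hunique y' hy']

end RightDivision

theorem orth_13_parastrophe_general {Q : Type*} [Fintype Q] (mul rdiv : Q → Q → Q)
    (h1 : ∀ x y, mul (rdiv x y) y = x) (h2 : ∀ x y, rdiv (mul x y) y = x) :
    (∀ a b : Q, ∃! p : Q × Q, mul p.1 p.2 = a ∧ rdiv p.1 p.2 = b) ↔
      ∀ x y z : Q, mul (mul z x) x = mul (mul z y) y → x = y := by
  simp only [existsUnique_mul_rdiv_iff h1 h2]
  calc (∀ a b, ∃! y, mul (mul b y) y = a)
      ↔ ∀ b, Function.Bijective fun y => mul (mul b y) y := by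
        rw [forall_comm]
        simp only [Function.bijective_iff_existsUnique]
    _ ↔ ∀ b, Function.Injective fun y => mul (mul b y) y := by
        simp only [Finite.injective_iff_bijective]
    _ ↔ ∀ x y z, mul (mul z x) x = mul (mul z y) y → x = y :=
        ⟨fun h x y z hxy => h z hxy, fun h z x y hxy => h x y z hxy⟩

/-- a finite quasigroup is orthogonal to its (13)-parastrophe iff
(z·x)·x = (z·y)·y implies x = y. -/
theorem orth_13_parastrophe {Q : Type*} [Fintype Q] (mul rdiv : Q → Q → Q)
    (h1 : ∀ x y, mul (rdiv x y) y = x) (h2 : ∀ x y, rdiv (mul x y) y = x)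
    (hl : ∀ x, Function.Bijective (mul x)) (hr : ∀ y, Function.Bijective (fun x => mul x y)) :
    (∀ a b : Q, ∃! p : Q × Q, mul p.1 p.2 = a ∧ rdiv p.1 p.2 = b) ↔
      ∀ x y z : Q, mul (mul z x) x = mul (mul z y) y → x = y :=
  orth_13_parastrophe_general mul rdiv h1 h2
end

section
/- Let (Q, ·) be a finite quasigroup. Then (Q,·) is orthogonal to its (132)-parastrophe if and only if for all x, y, z ∈ Q: (x·z)·x = (y·z)·y implies x = y. -/
/-!
Since `p132` is the (132)-parastrophe, the equation `p132 u w = b` just says `u = w·b`, so the system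
`u·w = a`, `p132 u w = b` has exactly as many solutions as the equation `(w·b)·w = a` in `w`.
Orthogonality therefore means that every map `w ↦ (w·b)·w` is bijective, which for a finite
`Q` is the same as injective.
-/

def Orthogonal {Q : Type*} (A B : Q → Q → Q) : Prop :=
  ∀ a b : Q, ∃! p : Q × Q, A p.1 p.2 = a ∧ B p.1 p.2 = b

theorem existsUnique_prod_fst_eq_iff {α β : Type*} (g : β → α) (P : β → Prop) :
    (∃! p : α × β, p.1 = g p.2 ∧ P p.2) ↔ ∃! b, P b := by
  constructor
  · rintro ⟨⟨u, w⟩, ⟨-, hw⟩, huniq⟩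
    exact ⟨w, hw, fun w' hw' => congrArg Prod.snd (huniq (g w', w') ⟨rfl, hw'⟩)⟩
  · rintro ⟨w, hw, huniq⟩
    refine ⟨(g w, w), ⟨rfl, hw⟩, ?_⟩
    rintro ⟨u', w'⟩ ⟨hu', hw'⟩
    obtain rfl := huniq w' hw'
    exact Prod.ext hu' rfl

section Parastrophe

variable {Q : Type*} {mul p132 : Q → Q → Q}

theorem mul_eq_and_p132_eq_iff (h1 : ∀ x y, p132 (mul x y) x = y)
    (h2 : ∀ z x, mul x (p132 z x) = z) {a b u w : Q} :
    mul u w = a ∧ p132 u w = b ↔ u = mul w b ∧ mul (mul w b) w = a := by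
  constructor
  · rintro ⟨ha, rfl⟩
    have hu : mul w (p132 u w) = u := h2 u w
    exact ⟨hu.symm, by rw [hu]; exact ha⟩
  · rintro ⟨rfl, ha⟩
    exact ⟨ha, h1 w b⟩

theorem orthogonal_p132_iff_bijective (h1 : ∀ x y, p132 (mul x y) x = y)
    (h2 : ∀ z x, mul x (p132 z x) = z) :
    Orthogonal mul p132 ↔ ∀ b, Function.Bijective (fun w => mul (mul w b) w) := by
  rw [Orthogonal, forall_comm]
  refine forall_congr' fun b => ?_
  rw [Function.bijective_iff_existsUnique]
  refine forall_congr' fun a => ?_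
  simp only [mul_eq_and_p132_eq_iff h1 h2]
  exact existsUnique_prod_fst_eq_iff (mul · b) (fun w => mul (mul w b) w = a)

end Parastrophe

theorem orth_132_parastrophe_general {Q : Type*} [Fintype Q] (mul p132 : Q → Q → Q)
    (h1 : ∀ x y, p132 (mul x y) x = y) (h2 : ∀ z x, mul x (p132 z x) = z) :
    (∀ a b : Q, ∃! p : Q × Q, mul p.1 p.2 = a ∧ p132 p.1 p.2 = b) ↔
      ∀ x y z : Q, mul (mul x z) x = mul (mul y z) y → x = y := by
  change Orthogonal mul p132 ↔ _
  simp only [orthogonal_p132_iff_bijective h1 h2, ← Finite.injective_iff_bijective,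
    Function.Injective]
  exact ⟨fun H x y z => @H z x y, fun H z x y => H x y z⟩

/-- a finite quasigroup is orthogonal to its (132)-parastrophe iff
(x·z)·x = (y·z)·y implies x = y.  Here p132 z x = y iff x·y = z. -/
theorem orth_132_parastrophe {Q : Type*} [Fintype Q] (mul p132 : Q → Q → Q)
    (h1 : ∀ x y, p132 (mul x y) x = y) (h2 : ∀ z x, mul x (p132 z x) = z)
    (hl : ∀ x, Function.Bijective (mul x)) (hr : ∀ y, Function.Bijective (fun x => mul x y)) :
    (∀ a b : Q, ∃! p : Q × Q, mul p.1 p.2 = a ∧ p132 p.1 p.2 = b) ↔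
      ∀ x y z : Q, mul (mul x z) x = mul (mul y z) y → x = y :=
  orth_132_parastrophe_general mul p132 h1 h2
end

section
/- Let p be a prime and k, m, a ∈ Z_p with k, m, k+m, k−m, k+1, m+1, k²+m, k+m² all nonzero mod p. Then the T-quasigroup on Z_p given by x∘y = kx + my + a is orthogonal to each of its five parastrophes ((12), (13), (23), (123), (132)). -/
/-- Orthogonality of two binary operations on a set. -/
def OrthOps {Q : Type*} (A B : Q → Q → Q) : Prop :=
  ∀ c d : Q, ∃! p : Q × Q, A p.1 p.2 = c ∧ B p.1 p.2 = d

/-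
Every parastrophe `B` of `x ∘ y = k x + m y + a` satisfies an affine relation
`e · B x y = a₂ x + b₂ y + c₂` with `e ∈ {1, k, m}`, so orthogonality of `∘` and `B` amounts to
unique solvability of a `2 × 2` linear system. Its determinant is, up to sign,
`(k + m)(k - m)`, `m (k + 1)`, `k (m + 1)` or `k² + m`.
-/

theorem existsUnique_of_det_ne_zero {F : Type*} [Field F] {a₁ b₁ a₂ b₂ : F} (c₁ c₂ : F)
    (hdet : a₁ * b₂ - a₂ * b₁ ≠ 0) :
    ∃! q : F × F, a₁ * q.1 + b₁ * q.2 = c₁ ∧ a₂ * q.1 + b₂ * q.2 = c₂ := by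
  set δ := a₁ * b₂ - a₂ * b₁
  refine ⟨(δ⁻¹ * (b₂ * c₁ - b₁ * c₂), δ⁻¹ * (a₁ * c₂ - a₂ * c₁)), ⟨?_, ?_⟩, ?_⟩
  · linear_combination c₁ * mul_inv_cancel₀ hdet
  · linear_combination c₂ * mul_inv_cancel₀ hdet
  · rintro ⟨x, y⟩ ⟨h₁, h₂⟩
    have hx : δ * x = b₂ * c₁ - b₁ * c₂ := by linear_combination b₂ * h₁ - b₁ * h₂
    have hy : δ * y = a₁ * c₂ - a₂ * c₁ := by linear_combination a₁ * h₂ - a₂ * h₁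
    rw [← hx, ← hy, inv_mul_cancel_left₀ hdet, inv_mul_cancel_left₀ hdet]

theorem orthOps_of_affine {F : Type*} [Field F] {A B : F → F → F}
    {a₁ b₁ c₁ e a₂ b₂ c₂ : F}
    (hA : ∀ x y, A x y = a₁ * x + b₁ * y + c₁)
    (hB : ∀ x y, e * B x y = a₂ * x + b₂ * y + c₂) (he : e ≠ 0)
    (hdet : a₁ * b₂ - a₂ * b₁ ≠ 0) : OrthOps A B := by
  intro c d
  refine (existsUnique_congr fun q => ?_).mpr
    (existsUnique_of_det_ne_zero (c - c₁) (e * d - c₂) hdet)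
  rw [hA, ← mul_right_inj' he (b := B q.1 q.2), hB]
  constructor <;> rintro ⟨h₁, h₂⟩ <;>
    exact ⟨by linear_combination h₁, by linear_combination h₂⟩

theorem Tquasigroup_orth_all_parastrophes_general (p : ℕ) [Fact p.Prime] (k m a : ZMod p)
    (hk : k ≠ 0) (hm : m ≠ 0) (hkm : k + m ≠ 0) (hkm' : k - m ≠ 0)
    (hk1 : k + 1 ≠ 0) (hm1 : m + 1 ≠ 0) (hk2m : k ^ 2 + m ≠ 0)
    (mul p13 p23 p123 p132 : ZMod p → ZMod p → ZMod p)
    (hmul : ∀ x y, mul x y = k * x + m * y + a)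
    (h13a : ∀ x y, mul (p13 x y) y = x)
    (h23a : ∀ x y, mul x (p23 x y) = y)
    (h123a : ∀ y z, mul z (p123 y z) = y)
    (h132b : ∀ z x, mul x (p132 z x) = z) :
    OrthOps mul (fun x y => mul y x) ∧ OrthOps mul p13 ∧ OrthOps mul p23 ∧
      OrthOps mul p123 ∧ OrthOps mul p132 := by
  have hswap : ∀ x y, 1 * mul y x = m * x + k * y + a := fun x y => by rw [hmul]; ring
  have h13 : ∀ x y, k * p13 x y = 1 * x + -m * y + -a := fun x y => by
    linear_combination h13a x y - hmul (p13 x y) y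
  have h23 : ∀ x y, m * p23 x y = -k * x + 1 * y + -a := fun x y => by
    linear_combination h23a x y - hmul x (p23 x y)
  have h123 : ∀ y z, m * p123 y z = 1 * y + -k * z + -a := fun y z => by
    linear_combination h123a y z - hmul z (p123 y z)
  have h132 : ∀ z x, m * p132 z x = 1 * z + -k * x + -a := fun z x => by
    linear_combination h132b z x - hmul x (p132 z x)
  have hdet_cyclic : k * -k - 1 * m ≠ 0 := fun h => hk2m (by linear_combination -h)
  refine ⟨orthOps_of_affine hmul hswap one_ne_zero ?_, orthOps_of_affine hmul h13 hk ?_,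
    orthOps_of_affine hmul h23 hm ?_, orthOps_of_affine hmul h123 hm hdet_cyclic,
    orthOps_of_affine hmul h132 hm hdet_cyclic⟩
  · exact fun h => mul_ne_zero hkm hkm' (by linear_combination h)
  · exact fun h => mul_ne_zero hm hk1 (by linear_combination -h)
  · exact fun h => mul_ne_zero hk hm1 (by linear_combination h)

/-- over Z_p with k, m, k+m, k-m, k+1, m+1, k²+m, k+m² nonzero, the
T-quasigroup x∘y = kx + my + a is orthogonal to each of its five parastrophes. -/
theorem Tquasigroup_orth_all_parastrophes (p : ℕ) [Fact p.Prime] (k m a : ZMod p)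
    (hk : k ≠ 0) (hm : m ≠ 0) (hkm : k + m ≠ 0) (hkm' : k - m ≠ 0)
    (hk1 : k + 1 ≠ 0) (hm1 : m + 1 ≠ 0) (hk2m : k ^ 2 + m ≠ 0) (hkm2 : k + m ^ 2 ≠ 0)
    (mul p13 p23 p123 p132 : ZMod p → ZMod p → ZMod p)
    (hmul : ∀ x y, mul x y = k * x + m * y + a)
    (h13a : ∀ x y, mul (p13 x y) y = x) (h13b : ∀ x y, p13 (mul x y) y = x)
    (h23a : ∀ x y, mul x (p23 x y) = y) (h23b : ∀ x y, p23 x (mul x y) = y)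
    (h123a : ∀ y z, mul z (p123 y z) = y) (h123b : ∀ z x, p123 (mul z x) z = x)
    (h132a : ∀ x y, p132 (mul x y) x = y) (h132b : ∀ z x, mul x (p132 z x) = z) :
    OrthOps mul (fun x y => mul y x) ∧ OrthOps mul p13 ∧ OrthOps mul p23 ∧
      OrthOps mul p123 ∧ OrthOps mul p132 :=
  Tquasigroup_orth_all_parastrophes_general p k m a hk hm hkm hkm' hk1 hm1 hk2m mul p13 p23 p123
    p132 hmul h13a h23a h123a h132b
end
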